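/- arXiv:1001.1875 — 2 statements merged into one kernel-verified Lean document; each statement's English description precedes it below -/
import Mathlib

section
/- Let Λ = 0, M > 0, A₀ ∈ (0,1), and define v(ρ, E)² = (f(ρ)/A₀)(1 - f(ρ)/(A₀E²)) with f(ρ) = 1 - 2M/r(ρ) where r(ρ) → ∞ as ρ → ∞. Then lim_{ρ→∞} v(ρ,E)² = (1/A₀)(1 - 1/(A₀E²)), and for all sufficiently large E this limit exceeds 1. Moreover v(ρ,E)² < 1/A₀ for all ρ, E. -/
open Filter Topology

/- With f = 1 - 2M/r, the hypothesis 2M < r puts f in (0, 1), which gives v² < f/A₀ < 1/A₀; r → ∞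
gives f → 1, hence the limit of v². That limit tends to 1/A₀ > 1 as E → ∞, so it exceeds 1 for
large E. -/

lemma tendsto_one_sub_div_of_tendsto_atTop {α : Type*} {l : Filter α} {r : α → ℝ}
    (hr : Tendsto r l atTop) (c : ℝ) : Tendsto (fun x => 1 - c / r x) l (𝓝 1) := by
  simpa using tendsto_const_nhds.sub (hr.const_div_atTop c)

lemma tendsto_div_mul_one_sub_div {α : Type*} {l : Filter α} {g : α → ℝ}
    (hg : Tendsto g l (𝓝 1)) (a k : ℝ) :
    Tendsto (fun x => (g x / a) * (1 - g x / k)) l (𝓝 ((1 / a) * (1 - 1 / k))) :=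
  (hg.div_const a).mul (tendsto_const_nhds.sub (hg.div_const k))

lemma one_sub_div_mem_Ioo {c x : ℝ} (hc : 0 < c) (hcx : c < x) : 1 - c / x ∈ Set.Ioo 0 1 := by
  have hx : 0 < x := hc.trans hcx
  constructor
  · rw [sub_pos, div_lt_one hx]
    exact hcx
  · have : 0 < c / x := div_pos hc hx
    linarith

lemma div_mul_one_sub_div_lt_one_div {f a k : ℝ} (hf : f ∈ Set.Ioo 0 1) (ha : 0 < a)
    (hk : 0 < k) : (f / a) * (1 - f / k) < 1 / a := calc
  (f / a) * (1 - f / k) < f / a := mul_lt_of_lt_one_right (div_pos hf.1 ha)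
    (sub_lt_self 1 (div_pos hf.1 hk))
  _ < 1 / a := div_lt_div_of_pos_right hf.2 ha

lemma tendsto_one_div_mul_one_sub_one_div_mul_sq {a : ℝ} (ha : 0 < a) :
    Tendsto (fun E : ℝ => (1 / a) * (1 - 1 / (a * E ^ 2))) atTop (𝓝 (1 / a)) := by
  have hsq : Tendsto (fun E : ℝ => a * E ^ 2) atTop atTop :=
    (tendsto_pow_atTop two_ne_zero).const_mul_atTop ha
  simpa using (tendsto_const_nhds (x := 1 / a)).mul
    ((tendsto_const_nhds (x := (1 : ℝ))).sub (hsq.const_div_atTop 1))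

/-- Proposition 2 (Schwarzschild case, `Λ = 0`): with `A₀ ∈ (0,1)`,
`f(ρ) = 1 - 2M/r(ρ)` and `r(ρ) → ∞`, the Fermi speed squared tends to
`(1/A₀)(1 - 1/(A₀E²))`, which exceeds `1` for all sufficiently large `E`;
moreover the Fermi speed squared is always below `1/A₀`. -/
theorem stmt_8 (M A₀ : ℝ) (r : ℝ → ℝ)
    (hM : 0 < M) (hA₀ : 0 < A₀) (hA₁ : A₀ < 1)
    (hr : Filter.Tendsto r Filter.atTop Filter.atTop)
    (hext : ∀ ρ : ℝ, 2 * M < r ρ) :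
    (∀ E : ℝ, 0 < E →
        Filter.Tendsto
          (fun ρ : ℝ =>
            ((1 - 2 * M / r ρ) / A₀) * (1 - (1 - 2 * M / r ρ) / (A₀ * E ^ 2)))
          Filter.atTop (nhds ((1 / A₀) * (1 - 1 / (A₀ * E ^ 2))))) ∧
      (∃ E₁ : ℝ, ∀ E : ℝ, E₁ ≤ E → 1 < (1 / A₀) * (1 - 1 / (A₀ * E ^ 2))) ∧
      (∀ ρ E : ℝ, 0 < E →
        ((1 - 2 * M / r ρ) / A₀) * (1 - (1 - 2 * M / r ρ) / (A₀ * E ^ 2))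
          < 1 / A₀) := by
  refine ⟨fun E _ => ?_, ?_, fun ρ E hE => ?_⟩
  · exact tendsto_div_mul_one_sub_div (tendsto_one_sub_div_of_tendsto_atTop hr _) _ _
  · have hlim := tendsto_one_div_mul_one_sub_one_div_mul_sq hA₀
    exact eventually_atTop.mp (hlim.eventually_const_lt (one_lt_one_div hA₀ hA₁))
  · exact div_mul_one_sub_div_lt_one_div (one_sub_div_mem_Ioo (by positivity) (hext ρ)) hA₀
      (by positivity)
end

section
/- The function h(ρ) = 1 - (1 - 2M/r(ρ) - Λr(ρ)²/3)/(1 - 2M/r₀ - Λr₀²/3) (i.e., ‖v_kin‖² at critical energy) satisfies h(ρ₀) = 0, h'(ρ₀) = 0, and h''(ρ₀) = 2(2M/r₀³ + Λ/3) = 2Λ, where r₀ = (3M/Λ)^{1/3}, r(ρ₀) = r₀, and r'(ρ) = √(1 - 2M/r(ρ) - Λr(ρ)²/3). -/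
/-!
With the lapse `f(r) = 1 - 2M/r - Λr²/3` and `r' = √(f ∘ r)`, the chain rule gives
`(f ∘ r)' = (f' ∘ r) · √(f ∘ r)`, which vanishes at `ρ₀` because `r₀ = (3M/Λ)^{1/3}` is
the critical point of `f`. Differentiating once more, only `f''(r₀) · f(r₀)` survives, so
`h'' (ρ₀) = -f''(r₀) = 4M/r₀³ + 2Λ/3`, and `r₀³ = 3M/Λ` turns this into `2Λ`.
-/

open Topology

section SqrtFlow

variable {F r : ℝ → ℝ} (hode : ∀ ρ, deriv r ρ = √(F (r ρ)))
include hode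

theorem hasDerivAt_of_deriv_eq_sqrt {ρ : ℝ} (hF : 0 < F (r ρ)) :
    HasDerivAt r (√(F (r ρ))) ρ := by
  have hne : deriv r ρ ≠ 0 := by rw [hode]; positivity
  simpa only [hode] using (differentiableAt_of_deriv_ne_zero hne).hasDerivAt

theorem hasDerivAt_comp_of_deriv_eq_sqrt {ρ F' : ℝ} (hF : 0 < F (r ρ))
    (hF' : HasDerivAt F F' (r ρ)) :
    HasDerivAt (fun ρ => F (r ρ)) (F' * √(F (r ρ))) ρ :=
  hF'.comp ρ (hasDerivAt_of_deriv_eq_sqrt hode hF)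

theorem deriv_comp_eventuallyEq_of_deriv_eq_sqrt {ρ₀ : ℝ} (hF : 0 < F (r ρ₀))
    (hdiff : ∀ᶠ x in 𝓝 (r ρ₀), DifferentiableAt ℝ F x) :
    deriv (fun ρ => F (r ρ)) =ᶠ[𝓝 ρ₀] fun ρ => deriv F (r ρ) * √(F (r ρ)) := by
  have hr : ContinuousAt r ρ₀ := (hasDerivAt_of_deriv_eq_sqrt hode hF).continuousAt
  have hFr : ContinuousAt (fun ρ => F (r ρ)) ρ₀ :=
    hdiff.self_of_nhds.continuousAt.comp hr
  filter_upwards [hr.eventually hdiff, hFr.eventually (eventually_gt_nhds hF)]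
    with ρ hdiffρ hFρ
  exact (hasDerivAt_comp_of_deriv_eq_sqrt hode hFρ hdiffρ.hasDerivAt).deriv

theorem hasDerivAt_deriv_comp_of_deriv_eq_sqrt {ρ₀ F'' : ℝ} (hF : 0 < F (r ρ₀))
    (hdiff : ∀ᶠ x in 𝓝 (r ρ₀), DifferentiableAt ℝ F x) (hcrit : deriv F (r ρ₀) = 0)
    (hF'' : HasDerivAt (deriv F) F'' (r ρ₀)) :
    HasDerivAt (deriv fun ρ => F (r ρ)) (F'' * F (r ρ₀)) ρ₀ := by
  have hr := hasDerivAt_of_deriv_eq_sqrt hode hF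
  have hFr : HasDerivAt (fun ρ => F (r ρ)) 0 ρ₀ := by
    simpa only [hcrit, zero_mul] using hasDerivAt_comp_of_deriv_eq_sqrt hode hF
      hdiff.self_of_nhds.hasDerivAt
  have hprod := (hF''.comp ρ₀ hr).mul (hFr.sqrt hF.ne')
  refine (hprod.congr_of_eventuallyEq
    (deriv_comp_eventuallyEq_of_deriv_eq_sqrt hode hF hdiff)).congr_deriv ?_
  simp only [Function.comp, hcrit, zero_mul, add_zero]
  rw [mul_assoc, Real.mul_self_sqrt hF.le]

end SqrtFlow

noncomputable def lapse (M Λ x : ℝ) : ℝ := 1 - 2 * M / x - Λ * x ^ 2 / 3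

theorem hasDerivAt_lapse (M Λ : ℝ) {x : ℝ} (hx : x ≠ 0) :
    HasDerivAt (lapse M Λ) (2 * M / x ^ 2 - 2 * Λ * x / 3) x := by
  have : HasDerivAt (fun y => 1 - 2 * M / y - Λ * y ^ 2 / 3) _ x :=
    ((hasDerivAt_const x 1).sub ((hasDerivAt_const x (2 * M)).div (hasDerivAt_id x) hx)).sub
      (((hasDerivAt_pow 2 x).const_mul Λ).div_const 3)
  refine this.congr_deriv ?_
  simp only [id]
  field_simp
  ring

theorem hasDerivAt_deriv_lapse (M Λ : ℝ) {x : ℝ} (hx : x ≠ 0) :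
    HasDerivAt (deriv (lapse M Λ)) (-(4 * M / x ^ 3) - 2 * Λ / 3) x := by
  have hderiv : deriv (lapse M Λ) =ᶠ[𝓝 x] fun y => 2 * M / y ^ 2 - 2 * Λ * y / 3 := by
    filter_upwards [isOpen_ne.mem_nhds hx] with y hy
    exact (hasDerivAt_lapse M Λ hy).deriv
  have : HasDerivAt (fun y => 2 * M / y ^ 2 - 2 * Λ * y / 3) _ x :=
    ((hasDerivAt_const x (2 * M)).div (hasDerivAt_pow 2 x) (pow_ne_zero 2 hx)).sub
      (((hasDerivAt_id x).const_mul (2 * Λ)).div_const 3)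
  refine (this.congr_of_eventuallyEq hderiv).congr_deriv ?_
  field_simp
  ring

theorem deriv_lapse_eq_zero {M Λ x : ℝ} (hx : x ≠ 0) (hcrit : Λ * x ^ 3 = 3 * M) :
    deriv (lapse M Λ) x = 0 := by
  rw [(hasDerivAt_lapse M Λ hx).deriv]
  field_simp
  linear_combination -2 * hcrit

/-- Hubble's law derivation: the critical-energy kinematic speed squared
`h(ρ) = 1 - f(r(ρ))/f(r₀)` (with `f(r) = 1 - 2M/r - Λr²/3`,
`r' = √(f(r))`, `r(ρ₀) = r₀ = (3M/Λ)^{1/3}`) satisfies `h(ρ₀) = 0`,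
`h'(ρ₀) = 0` and `h''(ρ₀) = 2(2M/r₀³ + Λ/3) = 2Λ`. -/
theorem stmt_17 (M Λ ρ₀ r₀ : ℝ) (r : ℝ → ℝ)
    (hM : 0 < M) (hΛ : 0 < Λ)
    (hr₀ : r₀ = (3 * M / Λ) ^ ((1 : ℝ) / 3))
    (hf₀ : 0 < 1 - 2 * M / r₀ - Λ * r₀ ^ 2 / 3)
    (hode : ∀ ρ : ℝ, deriv r ρ = Real.sqrt (1 - 2 * M / r ρ - Λ * (r ρ) ^ 2 / 3))
    (hinit : r ρ₀ = r₀) :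
    (1 - (1 - 2 * M / r ρ₀ - Λ * (r ρ₀) ^ 2 / 3)
          / (1 - 2 * M / r₀ - Λ * r₀ ^ 2 / 3)) = 0 ∧
      deriv (fun ρ : ℝ =>
          1 - (1 - 2 * M / r ρ - Λ * (r ρ) ^ 2 / 3)
            / (1 - 2 * M / r₀ - Λ * r₀ ^ 2 / 3)) ρ₀ = 0 ∧
      deriv (deriv (fun ρ : ℝ =>
          1 - (1 - 2 * M / r ρ - Λ * (r ρ) ^ 2 / 3)
            / (1 - 2 * M / r₀ - Λ * r₀ ^ 2 / 3))) ρ₀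
        = 2 * (2 * M / r₀ ^ 3 + Λ / 3) ∧
      2 * (2 * M / r₀ ^ 3 + Λ / 3) = 2 * Λ := by
  subst hinit
  have hr₀pos : 0 < r ρ₀ := hr₀ ▸ Real.rpow_pos_of_pos (by positivity) _
  have hcube : r ρ₀ ^ 3 = 3 * M / Λ := by
    rw [hr₀, one_div]
    exact Real.rpow_inv_natCast_pow (by positivity) three_ne_zero
  have hcrit : deriv (lapse M Λ) (r ρ₀) = 0 :=
    deriv_lapse_eq_zero hr₀pos.ne' (by rw [hcube]; field_simp)
  have hdiff : ∀ᶠ x in 𝓝 (r ρ₀), DifferentiableAt ℝ (lapse M Λ) x := by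
    filter_upwards [isOpen_ne.mem_nhds hr₀pos.ne'] with x hx
    exact (hasDerivAt_lapse M Λ hx).differentiableAt
  have hderiv₁ := hasDerivAt_comp_of_deriv_eq_sqrt (F := lapse M Λ) hode hf₀
    hdiff.self_of_nhds.hasDerivAt
  have hderiv₂ := hasDerivAt_deriv_comp_of_deriv_eq_sqrt (F := lapse M Λ) hode hf₀ hdiff hcrit
    (hasDerivAt_deriv_lapse M Λ hr₀pos.ne')
  change 1 - lapse M Λ (r ρ₀) / lapse M Λ (r ρ₀) = 0 ∧
    deriv (fun ρ => 1 - lapse M Λ (r ρ) / lapse M Λ (r ρ₀)) ρ₀ = 0 ∧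
    deriv (deriv (fun ρ => 1 - lapse M Λ (r ρ) / lapse M Λ (r ρ₀))) ρ₀ = _ ∧ _
  simp only [deriv_const_sub', deriv.fun_neg, deriv_div_const, hderiv₁.deriv, hderiv₂.deriv,
    hcrit]
  have hF : lapse M Λ (r ρ₀) ≠ 0 := hf₀.ne'
  refine ⟨by rw [div_self hF, sub_self], by simp, by field_simp; ring, ?_⟩
  rw [hcube]
  field_simp
  ring
end
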